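/- arXiv:0909.0298 — 5 statements merged into one kernel-verified Lean document; each statement's English description precedes it below -/
import Mathlib

section
/- (Theorem 1, primary resolution of Wu's Conjecture.) Let k be a real number that is not a nonnegative integer, let z₁ be a real number with z₁ > 1, let M ∈ ℂ with M ≠ 0, and define c_n = M · z₁^k · γ_n(k) · (−z₁)^{−n} for n ∈ ℕ (the Taylor coefficients of f(z) = M(z₁ − z)^k about 0). Set R_n = c_{n+1}/c_n and D_n = R_{n+1}/R_n. Then for every n ≥ 1: (n+1) − (n+2)·D_n ≠ 0, and the base parameters are recovered by k = n + (n+1)/((n+1) − (n+2)·D_n), z₁ = (n − k)/((n+1)·R_n), and M = c₀ · z₁^{−k} (principal-branch real power z₁^{−k}). -/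
/-- The generalized binomial coefficient γ_n(k) = k(k−1)⋯(k−n+1)/n!, with γ_0(k) = 1. -/
noncomputable def genBinom (k : ℂ) (n : ℕ) : ℂ :=
  (∏ i ∈ Finset.range n, (k - i)) / (n.factorial : ℂ)

/-!
The coefficients `c n = A γ_n(k) w⁻ⁿ` satisfy `c (n+1) / c n = (k - n) / ((n+1) w)`, so the ratios
`R n` are explicit. Dividing two consecutive ratios cancels `w` and leaves
`(n+1) - (n+2) D n = (n+1)/(k-n)`, from which `k` is read off; `R n` then gives `w = -z₁`,
and `c 0 = M z₁^k` gives `M`.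
-/

theorem genBinom_zero (k : ℂ) : genBinom k 0 = 1 := by
  simp [genBinom]

theorem genBinom_succ (k : ℂ) (n : ℕ) :
    genBinom k (n + 1) = genBinom k n * ((k - n) / (n + 1)) := by
  have hfact : (n.factorial : ℂ) ≠ 0 := by exact_mod_cast n.factorial_ne_zero
  have hsucc : (n : ℂ) + 1 ≠ 0 := Nat.cast_add_one_ne_zero n
  simp only [genBinom, Finset.prod_range_succ, Nat.factorial_succ, Nat.cast_mul, Nat.cast_succ]
  field_simp

theorem genBinom_ne_zero {k : ℂ} (hk : ∀ m : ℕ, k ≠ m) (n : ℕ) : genBinom k n ≠ 0 :=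
  div_ne_zero (Finset.prod_ne_zero_iff.mpr fun i _ ↦ sub_ne_zero.mpr (hk i))
    (by exact_mod_cast n.factorial_ne_zero)

noncomputable def binomRatio (k w : ℂ) (n : ℕ) : ℂ :=
  (k - n) / ((n + 1) * w)

theorem succ_div_eq_binomRatio {A k w : ℂ} {c : ℕ → ℂ}
    (hc : ∀ n : ℕ, c n = A * genBinom k n * w ^ (-(n : ℤ)))
    (hA : A ≠ 0) (hw : w ≠ 0) (hk : ∀ m : ℕ, k ≠ m) (n : ℕ) :
    c (n + 1) / c n = binomRatio k w n := by
  have hγ := genBinom_ne_zero hk n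
  have hsucc : (n : ℂ) + 1 ≠ 0 := Nat.cast_add_one_ne_zero n
  have hpow : w ^ (-((n + 1 : ℕ) : ℤ)) = w ^ (-(n : ℤ)) * w⁻¹ := by
    rw [Nat.cast_succ, neg_add, zpow_add₀ hw, zpow_neg_one]
  rw [hc, hc, genBinom_succ, hpow, binomRatio]
  field_simp

theorem succ_sub_mul_binomRatio_div {k w : ℂ} {n : ℕ} (hw : w ≠ 0) (hkn : k - n ≠ 0) :
    ((n : ℂ) + 1) - ((n : ℂ) + 2) * (binomRatio k w (n + 1) / binomRatio k w n)
      = ((n : ℂ) + 1) / (k - n) := by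
  have hsucc : (n : ℂ) + 1 ≠ 0 := Nat.cast_add_one_ne_zero n
  have hsucc' : (n : ℂ) + 2 ≠ 0 := by exact_mod_cast Nat.succ_ne_zero (n + 1)
  simp only [binomRatio, Nat.cast_succ, add_assoc, one_add_one_eq_two]
  field_simp
  ring

theorem div_succ_mul_binomRatio {k w : ℂ} {n : ℕ} (hw : w ≠ 0) (hkn : k - n ≠ 0) :
    ((n : ℂ) - k) / (((n : ℂ) + 1) * binomRatio k w n) = -w := by
  have hsucc : (n : ℂ) + 1 ≠ 0 := Nat.cast_add_one_ne_zero n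
  rw [binomRatio, div_eq_iff (mul_ne_zero hsucc (div_ne_zero hkn (mul_ne_zero hsucc hw)))]
  field_simp
  ring

theorem cpow_mul_ofReal_rpow_neg {x : ℝ} (hx : 0 < x) (y : ℝ) :
    (x : ℂ) ^ (y : ℂ) * ((x ^ (-y) : ℝ) : ℂ) = 1 := by
  rw [Complex.ofReal_cpow hx.le, Complex.ofReal_neg,
    ← Complex.cpow_add _ _ (Complex.ofReal_ne_zero.mpr hx.ne'), add_neg_cancel, Complex.cpow_zero]

/-- Theorem 1 of Wu's paper (primary resolution to the Conjecture): from the Taylor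
coefficients c_n = M·z₁^k·γ_n(k)·(−z₁)^{−n} of f(z) = M(z₁−z)^k, the base parameters
(k, z₁, M) are recovered, for every n ≥ 1, by
k = n + (n+1)/((n+1) − (n+2)D_n), z₁ = (n−k)/((n+1)R_n), M = c₀·z₁^{−k}. -/
theorem stmt_4 (k z₁ : ℝ) (hk : ∀ m : ℕ, k ≠ (m : ℝ)) (hz₁ : 1 < z₁)
    (M : ℂ) (hM : M ≠ 0) (c R D : ℕ → ℂ)
    (hc : ∀ n : ℕ,
      c n = M * (z₁ : ℂ) ^ (k : ℂ) * genBinom (k : ℂ) n * (-(z₁ : ℂ)) ^ (-(n : ℤ)))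
    (hR : ∀ n : ℕ, R n = c (n + 1) / c n)
    (hD : ∀ n : ℕ, D n = R (n + 1) / R n) :
    ∀ n : ℕ, 1 ≤ n →
      ((n : ℂ) + 1) - ((n : ℂ) + 2) * D n ≠ 0 ∧
      (k : ℂ) = (n : ℂ) + ((n : ℂ) + 1) / (((n : ℂ) + 1) - ((n : ℂ) + 2) * D n) ∧
      (z₁ : ℂ) = ((n : ℂ) - (k : ℂ)) / (((n : ℂ) + 1) * R n) ∧
      M = c 0 * ((z₁ ^ (-k) : ℝ) : ℂ) := by
  have hz₁pos : 0 < z₁ := zero_lt_one.trans hz₁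
  have hz₁0 : (z₁ : ℂ) ≠ 0 := Complex.ofReal_ne_zero.mpr hz₁pos.ne'
  have hz : -(z₁ : ℂ) ≠ 0 := neg_ne_zero.mpr hz₁0
  have hk' : ∀ m : ℕ, (k : ℂ) ≠ m := fun m ↦ by exact_mod_cast hk m
  have hA : M * (z₁ : ℂ) ^ (k : ℂ) ≠ 0 := mul_ne_zero hM fun h ↦ hz₁0 ((Complex.cpow_eq_zero_iff _ _).mp h).1
  have hRk : ∀ n, R n = binomRatio k (-z₁) n :=
    fun n ↦ (hR n).trans (succ_div_eq_binomRatio hc hA hz hk' n)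
  intro n _
  have hkn : (k : ℂ) - n ≠ 0 := sub_ne_zero.mpr (hk' n)
  have hdefect : ((n : ℂ) + 1) - ((n : ℂ) + 2) * D n = ((n : ℂ) + 1) / (k - n) := by
    rw [hD, hRk, hRk]
    exact succ_sub_mul_binomRatio_div hz hkn
  refine ⟨?_, ?_, ?_, ?_⟩
  · rw [hdefect]
    exact div_ne_zero (Nat.cast_add_one_ne_zero n) hkn
  · rw [hdefect, div_div_cancel₀ (Nat.cast_add_one_ne_zero n)]
    ring
  · rw [hRk, div_succ_mul_binomRatio hz hkn, neg_neg]
  · rw [hc 0, genBinom_zero, Nat.cast_zero, neg_zero, zpow_zero, mul_one, mul_one, mul_assoc,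
      cpow_mul_ofReal_rpow_neg hz₁pos, mul_one]
end

section
/- Let M, k, z₁ be real numbers with z₁ > 1, and define f(z) = M·(z₁ − z)^k for |z| < z₁ and F(z) = −M·(z₁ − 1/z)^k for |z| > 1/z₁ (principal-branch complex powers, well defined since the bases have positive real part). Then: (a) F is complex differentiable at every z ∈ ℂ with |z| > 1/z₁; and (b) for every θ ∈ ℝ, F(e^{iθ}) = −conj(f(e^{iθ})); in particular Re F(e^{iθ}) = −Re f(e^{iθ}) and Im F(e^{iθ}) = Im f(e^{iθ}) on the unit circle. -/
/-! On the unit circle `1 / z = conj z`, so `F z = -M (z₁ - conj z)^k`. Since `z₁ - z` has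
positive real part it lies off the branch cut of the principal power, where `cpow` commutes
with conjugation for a real exponent; hence `F z = -conj (f z)`. Wherever `|z| > 1/z₁`,
`z₁ - 1/z` lies in the right half-plane, where `w ↦ w^k` is holomorphic. -/

open Complex ComplexConjugate

lemma Complex.ofReal_sub_mem_slitPlane {c : ℝ} {w : ℂ} (hw : ‖w‖ < c) :
    (c : ℂ) - w ∈ slitPlane := by
  left
  simp only [sub_re, ofReal_re]
  linarith [re_le_norm w]

lemma Complex.norm_one_div_lt_of_inv_lt_norm {c : ℝ} (hc : 0 < c) {z : ℂ} (hz : 1 / c < ‖z‖) :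
    ‖1 / z‖ < c := by
  have hz0 : 0 < ‖z‖ := (one_div_pos.mpr hc).trans hz
  rw [norm_div, norm_one, div_lt_iff₀ hz0]
  rwa [div_lt_iff₀ hc, mul_comm] at hz

lemma Complex.differentiableAt_ofReal_sub_one_div_cpow {c : ℝ} (hc : 0 < c) (k : ℂ) {z : ℂ}
    (hz : 1 / c < ‖z‖) : DifferentiableAt ℂ (fun z : ℂ => ((c : ℂ) - 1 / z) ^ k) z := by
  have hz0 : z ≠ 0 := norm_pos_iff.mp ((one_div_pos.mpr hc).trans hz)
  refine DifferentiableAt.cpow ?_ (differentiableAt_const k)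
    (ofReal_sub_mem_slitPlane (norm_one_div_lt_of_inv_lt_norm hc hz))
  exact (differentiableAt_const _).sub ((differentiableAt_const _).div differentiableAt_id hz0)

lemma Complex.ofReal_sub_conj_cpow_ofReal {c : ℝ} {w : ℂ} (hw : ‖w‖ < c) (k : ℝ) :
    ((c : ℂ) - conj w) ^ (k : ℂ) = conj (((c : ℂ) - w) ^ (k : ℂ)) := by
  have harg : ((c : ℂ) - w).arg ≠ Real.pi :=
    (mem_slitPlane_iff_arg.mp (ofReal_sub_mem_slitPlane hw)).1
  rw [← conj_ofReal k, ← conj_cpow _ _ harg, map_sub, conj_ofReal, conj_ofReal]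

lemma Complex.ofReal_sub_one_div_cpow_of_norm_eq_one {c : ℝ} (hc : 1 < c) (k : ℝ) {z : ℂ}
    (hz : ‖z‖ = 1) :
    ((c : ℂ) - 1 / z) ^ (k : ℂ) = conj (((c : ℂ) - z) ^ (k : ℂ)) := by
  rw [one_div, inv_eq_conj hz, ofReal_sub_conj_cpow_ofReal (hz ▸ hc)]

/-- The Complement Conjecture construction (14)–(15b): with f(z) = M(z₁ − z)^k and the
complement function F(z) = −M(z₁ − 1/z)^k (M, k, z₁ real, z₁ > 1, principal powers),
(a) F is complex differentiable at every z with |z| > 1/z₁, and (b) on the unit circle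
F(e^{iθ}) = −conj(f(e^{iθ})); in particular Re F = −Re f and Im F = Im f there. -/
theorem stmt_8 (M k z₁ : ℝ) (hz₁ : 1 < z₁) (f F : ℂ → ℂ)
    (hf : ∀ z : ℂ, f z = (M : ℂ) * ((z₁ : ℂ) - z) ^ (k : ℂ))
    (hF : ∀ z : ℂ, F z = -(M : ℂ) * ((z₁ : ℂ) - 1 / z) ^ (k : ℂ)) :
    (∀ z : ℂ, 1 / z₁ < ‖z‖ → DifferentiableAt ℂ F z) ∧
    (∀ θ : ℝ,
      F (Complex.exp (θ * Complex.I)) =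
          -(starRingEnd ℂ) (f (Complex.exp (θ * Complex.I))) ∧
      (F (Complex.exp (θ * Complex.I))).re = -(f (Complex.exp (θ * Complex.I))).re ∧
      (F (Complex.exp (θ * Complex.I))).im = (f (Complex.exp (θ * Complex.I))).im) := by
  have hFeq : F = fun z => -(M : ℂ) * ((z₁ : ℂ) - 1 / z) ^ (k : ℂ) := funext hF
  refine ⟨fun z hz => ?_, fun θ => ?_⟩
  · rw [hFeq]
    exact (differentiableAt_ofReal_sub_one_div_cpow (zero_lt_one.trans hz₁) k hz).const_mul _
  · have hconj : F (exp (θ * I)) = -conj (f (exp (θ * I))) := by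
      rw [hF, hf, ofReal_sub_one_div_cpow_of_norm_eq_one hz₁ k (norm_exp_ofReal_mul_I θ),
        map_mul, conj_ofReal, neg_mul]
    exact ⟨hconj, by simp [hconj], by simp [hconj]⟩
end

section
/- Let r > 1 and let f : ℂ → ℂ be holomorphic on the open ball of radius r centered at 0, and let θ₀ ∈ ℝ. Then the Cauchy principal value of the boundary integral reproduces f on the unit circle: the limit as ε → 0⁺ of (1/π) · ( ∫_{θ₀+ε}^{θ₀+π} f(e^{iφ}) · e^{iφ}/(e^{iφ} − e^{iθ₀}) dφ + ∫_{θ₀−π}^{θ₀−ε} f(e^{iφ}) · e^{iφ}/(e^{iφ} − e^{iθ₀}) dφ ) exists and equals f(e^{iθ₀}). -/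
/-!
Write `f t = f z₀ + (t - z₀) * dslope f z₀ t`. The `dslope` part is holomorphic on the disc and
continuous on the circle, so its punctured integrals tend to the full-period integral, which
vanishes by Cauchy's theorem. For the remaining kernel `t / (t - z₀)` the points `θ₀ ± u` pair
up to give exactly `1`, because `e^{i(θ₀+u)} e^{i(θ₀-u)} = z₀²`; so the punctured kernel
integral is exactly `π - ε`.
-/

open Complex Filter Metric Set Topology intervalIntegral
open scoped Real

/-- With `t = e^{iφ}`, `f t * circleCauchyKernel θ₀ φ dφ = -i f t dt / (t - e^{iθ₀})`. -/
noncomputable def circleCauchyKernel (θ₀ φ : ℝ) : ℂ :=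
  exp (I * φ) / (exp (I * φ) - exp (I * θ₀))

lemma exp_I_mul_ne_exp_I_mul {φ θ : ℝ} (h0 : 0 < |φ - θ|) (h2π : |φ - θ| < 2 * π) :
    exp (I * φ) ≠ exp (I * θ) := by
  rw [Ne, exp_eq_exp_iff_exists_int]
  rintro ⟨n, hn⟩
  have hφθ : φ - θ = n * (2 * π) := by
    have : φ = θ + n * (2 * π) := by simpa using congr_arg im hn
    linarith
  rw [hφθ, abs_mul, abs_of_pos Real.two_pi_pos, ← Int.cast_abs] at h0 h2π
  have h0' : (0 : ℤ) < |n| := by exact_mod_cast (pos_of_mul_pos_left h0 Real.two_pi_pos.le)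
  have h1 : |n| < (1 : ℤ) := by
    exact_mod_cast (mul_lt_iff_lt_one_left Real.two_pi_pos).mp h2π
  omega

lemma div_sub_add_div_sub_eq_one {K : Type*} [Field K] {a b z : K} (hab : a * b = z * z)
    (ha : a ≠ z) (hb : b ≠ z) : a / (a - z) + b / (b - z) = 1 := by
  rw [div_add_div _ _ (sub_ne_zero.mpr ha) (sub_ne_zero.mpr hb), div_eq_one_iff_eq
    (mul_ne_zero (sub_ne_zero.mpr ha) (sub_ne_zero.mpr hb))]
  linear_combination hab

lemma exp_I_mul_add_ne_and_sub_ne (θ₀ : ℝ) {u : ℝ} (h0 : 0 < u) (h2π : u < 2 * π) :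
    exp (I * ↑(θ₀ + u)) ≠ exp (I * θ₀) ∧ exp (I * ↑(θ₀ - u)) ≠ exp (I * θ₀) :=
  ⟨exp_I_mul_ne_exp_I_mul (by simp [abs_of_pos h0, h0]) (by simp [abs_of_pos h0, h2π]),
    exp_I_mul_ne_exp_I_mul (by simp [abs_of_pos h0, h0]) (by simp [abs_of_pos h0, h2π])⟩

lemma circleCauchyKernel_add_add_circleCauchyKernel_sub (θ₀ : ℝ) {u : ℝ} (h0 : 0 < u)
    (h2π : u < 2 * π) :
    circleCauchyKernel θ₀ (θ₀ + u) + circleCauchyKernel θ₀ (θ₀ - u) = 1 := by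
  refine div_sub_add_div_sub_eq_one ?_ (exp_I_mul_add_ne_and_sub_ne θ₀ h0 h2π).1
    (exp_I_mul_add_ne_and_sub_ne θ₀ h0 h2π).2
  rw [← exp_add, ← exp_add]
  push_cast
  ring_nf

lemma continuousOn_circleCauchyKernel (θ₀ : ℝ) :
    ContinuousOn (circleCauchyKernel θ₀) {φ | exp (I * φ) ≠ exp (I * θ₀)} :=
  ContinuousOn.div (by fun_prop) (by fun_prop) fun _ hφ => sub_ne_zero.mpr hφ

lemma integral_circleCauchyKernel_punctured (θ₀ : ℝ) {ε : ℝ} (hε : 0 < ε) (hεπ : ε ≤ π) :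
    (∫ φ in θ₀ + ε..θ₀ + π, circleCauchyKernel θ₀ φ) +
      ∫ φ in θ₀ - π..θ₀ - ε, circleCauchyKernel θ₀ φ = π - ε := by
  have hu : ∀ u ∈ uIcc ε π, 0 < u ∧ u < 2 * π := fun u hu => by
    rw [uIcc_of_le hεπ] at hu
    exact ⟨hε.trans_le hu.1, hu.2.trans_lt (by linarith [Real.pi_pos])⟩
  have hne u (h : u ∈ uIcc ε π) := exp_I_mul_add_ne_and_sub_ne θ₀ (hu u h).1 (hu u h).2
  have hK := continuousOn_circleCauchyKernel θ₀
  have hadd : IntervalIntegrable (fun u => circleCauchyKernel θ₀ (θ₀ + u))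
      MeasureTheory.volume ε π :=
    (hK.comp (by fun_prop) fun u h => (hne u h).1).intervalIntegrable
  have hsub : IntervalIntegrable (fun u => circleCauchyKernel θ₀ (θ₀ - u))
      MeasureTheory.volume ε π :=
    (hK.comp (by fun_prop) fun u h => (hne u h).2).intervalIntegrable
  rw [← integral_comp_add_left, ← integral_comp_sub_left, ← integral_add hadd hsub,
    integral_congr fun u h =>
      circleCauchyKernel_add_add_circleCauchyKernel_sub θ₀ (hu u h).1 (hu u h).2]
  simp

lemma integral_comp_exp_I_mul_mul_eq_zero {g : ℂ → ℂ} (hg : DiffContOnCl ℂ g (ball 0 1))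
    (a : ℝ) : ∫ φ in a..a + 2 * π, g (exp (I * φ)) * exp (I * φ) = 0 := by
  have hper : Function.Periodic (fun φ : ℝ => g (exp (I * φ)) * exp (I * φ)) (2 * π) := by
    intro φ
    simp only [ofReal_add, mul_add, exp_add, ofReal_mul, ofReal_ofNat,
      show I * (2 * π) = 2 * π * I by ring, exp_two_pi_mul_I, mul_one]
  rw [hper.intervalIntegral_add_eq a 0, zero_add]
  have hcirc := hg.circleIntegral_eq_zero zero_le_one
  simp only [circleIntegral, deriv_circleMap, circleMap, zero_add, ofReal_one, one_mul,
    smul_eq_mul] at hcirc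
  have : ∫ φ in (0 : ℝ)..2 * π, I * (g (exp (I * φ)) * exp (I * φ)) = 0 := by
    rw [← hcirc]
    refine integral_congr fun φ _ => ?_
    simp only [mul_comm (φ : ℂ) I]
    ring
  simpa using this

lemma tendsto_integral_add_integral_punctured {E : Type*} [NormedAddCommGroup E]
    [NormedSpace ℝ E] {G : ℝ → E} (hG : Continuous G) (θ₀ c : ℝ) :
    Tendsto (fun ε => (∫ φ in θ₀ + ε..θ₀ + c, G φ) + ∫ φ in θ₀ - c..θ₀ - ε, G φ) (𝓝 0)
      (𝓝 (∫ φ in θ₀ - c..θ₀ + c, G φ)) := by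
  have hprim := continuous_primitive
    (fun a b => hG.intervalIntegrable (μ := MeasureTheory.volume) a b)
  have hcont :
      Continuous fun ε => (∫ φ in θ₀ + ε..θ₀ + c, G φ) + ∫ φ in θ₀ - c..θ₀ - ε, G φ := by
    simp only [integral_symm (θ₀ + c) (θ₀ + _) (f := G)]
    exact ((hprim _).comp (by fun_prop)).neg.add ((hprim _).comp (by fun_prop))
  simpa [add_comm (∫ φ in θ₀..θ₀ + c, G φ), integral_add_adjacent_intervals
    (hG.intervalIntegrable _ _) (hG.intervalIntegrable _ _)] using hcont.tendsto 0

lemma mul_div_sub_eq_dslope_mul_add (f : ℂ → ℂ) {z t : ℂ} (ht : t ≠ z) :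
    f t * t / (t - z) = dslope f z t * t + f z * (t / (t - z)) := by
  rw [dslope_of_ne _ ht, slope_def_field]
  field_simp [sub_ne_zero.mpr ht]
  ring

lemma integral_mul_div_sub_eq_integral_dslope_add (f : ℂ → ℂ) {θ₀ a b : ℝ}
    (hab : ∀ φ ∈ uIcc a b, exp (I * φ) ≠ exp (I * θ₀))
    (hG : IntervalIntegrable (fun φ : ℝ => dslope f (exp (I * θ₀)) (exp (I * φ)) * exp (I * φ))
      MeasureTheory.volume a b) :
    ∫ φ in a..b, f (exp (I * φ)) * exp (I * φ) / (exp (I * φ) - exp (I * θ₀)) =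
      (∫ φ in a..b, dslope f (exp (I * θ₀)) (exp (I * φ)) * exp (I * φ)) +
        f (exp (I * θ₀)) * ∫ φ in a..b, circleCauchyKernel θ₀ φ := by
  rw [← integral_const_mul, ← integral_add hG
    (((continuousOn_circleCauchyKernel θ₀).mono hab).intervalIntegrable.const_mul _)]
  exact integral_congr fun φ hφ => mul_div_sub_eq_dslope_mul_add f (hab φ hφ)

lemma integral_mul_div_sub_add_integral_punctured (f : ℂ → ℂ) (θ₀ : ℝ) {ε : ℝ} (hε : 0 < ε)
    (hεπ : ε ≤ π)
    (hG : Continuous fun φ : ℝ => dslope f (exp (I * θ₀)) (exp (I * φ)) * exp (I * φ)) :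
    (∫ φ in θ₀ + ε..θ₀ + π,
        f (exp (I * φ)) * exp (I * φ) / (exp (I * φ) - exp (I * θ₀))) +
      ∫ φ in θ₀ - π..θ₀ - ε,
        f (exp (I * φ)) * exp (I * φ) / (exp (I * φ) - exp (I * θ₀)) =
    (∫ φ in θ₀ + ε..θ₀ + π, dslope f (exp (I * θ₀)) (exp (I * φ)) * exp (I * φ)) +
      (∫ φ in θ₀ - π..θ₀ - ε, dslope f (exp (I * θ₀)) (exp (I * φ)) * exp (I * φ)) +
        f (exp (I * θ₀)) * (π - ε) := by
  have hπ := Real.pi_pos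
  have hright : ∀ φ ∈ uIcc (θ₀ + ε) (θ₀ + π), exp (I * φ) ≠ exp (I * θ₀) := fun φ hφ => by
    rw [uIcc_of_le (by linarith)] at hφ
    exact exp_I_mul_ne_exp_I_mul (by rw [abs_of_pos] <;> linarith [hφ.1])
      (by rw [abs_of_pos] <;> linarith [hφ.1, hφ.2])
  have hleft : ∀ φ ∈ uIcc (θ₀ - π) (θ₀ - ε), exp (I * φ) ≠ exp (I * θ₀) := fun φ hφ => by
    rw [uIcc_of_le (by linarith)] at hφ
    exact exp_I_mul_ne_exp_I_mul (by rw [abs_of_neg] <;> linarith [hφ.2])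
      (by rw [abs_of_neg] <;> linarith [hφ.1, hφ.2])
  rw [integral_mul_div_sub_eq_integral_dslope_add f hright (hG.intervalIntegrable _ _),
    integral_mul_div_sub_eq_integral_dslope_add f hleft (hG.intervalIntegrable _ _),
    ← integral_circleCauchyKernel_punctured θ₀ hε hεπ]
  ring

/-- Relation (III) of (3), specialized to the unit circle: for f holomorphic on a ball of
radius r > 1, the Cauchy principal value (1/π)P∫ f(e^{iφ})e^{iφ}/(e^{iφ}−e^{iθ₀}) dφ
exists and reproduces the boundary value f(e^{iθ₀}). -/
theorem stmt_10 (r : ℝ) (hr : 1 < r) (f : ℂ → ℂ)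
    (hf : DifferentiableOn ℂ f (Metric.ball 0 r)) (θ₀ : ℝ) :
    Filter.Tendsto (fun ε : ℝ =>
        (1 / (Real.pi : ℂ)) *
          ((∫ φ in (θ₀ + ε)..(θ₀ + Real.pi),
              f (Complex.exp (Complex.I * φ)) * Complex.exp (Complex.I * φ) /
                (Complex.exp (Complex.I * φ) - Complex.exp (Complex.I * θ₀))) +
            ∫ φ in (θ₀ - Real.pi)..(θ₀ - ε),
              f (Complex.exp (Complex.I * φ)) * Complex.exp (Complex.I * φ) /
                (Complex.exp (Complex.I * φ) - Complex.exp (Complex.I * θ₀))))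
      (nhdsWithin 0 (Set.Ioi 0)) (nhds (f (Complex.exp (Complex.I * θ₀)))) := by
  set z₀ := exp (I * θ₀)
  have hz₀ : z₀ ∈ ball (0 : ℂ) r := by simpa [z₀] using hr
  have hg : DiffContOnCl ℂ (dslope f z₀) (ball 0 1) :=
    ((differentiableOn_dslope (isOpen_ball.mem_nhds hz₀)).mpr hf).diffContOnCl_ball
      (closedBall_subset_ball hr)
  have hG : Continuous fun φ : ℝ => dslope f z₀ (exp (I * φ)) * exp (I * φ) :=
    (hg.continuousOn.comp_continuous (by fun_prop) fun φ => by simp [closure_ball]).mul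
      (by fun_prop)
  have hfull : ∫ φ in θ₀ - π..θ₀ + π, dslope f z₀ (exp (I * φ)) * exp (I * φ) = 0 := by
    simpa [sub_add, two_mul] using integral_comp_exp_I_mul_mul_eq_zero hg (θ₀ - π)
  have hlim := ((tendsto_integral_add_integral_punctured hG θ₀ π).add
    ((tendsto_const_nhds (x := f z₀)).mul ((tendsto_const_nhds (x := (π : ℂ))).sub
      (continuous_ofReal.tendsto 0)))).const_mul (1 / (π : ℂ))
  have hπ : (π : ℂ) ≠ 0 := ofReal_ne_zero.mpr Real.pi_ne_zero
  rw [hfull, ofReal_zero, sub_zero, zero_add, one_div_mul_eq_div, mul_div_cancel_right₀ _ hπ]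
    at hlim
  refine (hlim.mono_left nhdsWithin_le_nhds).congr' ?_
  filter_upwards [Ioo_mem_nhdsGT Real.pi_pos] with ε hε
  rw [integral_mul_div_sub_add_integral_punctured f θ₀ hε.1 hε.2.le hG]
end

section
/- (Li's Theorem on the location of a singularity pair, in sign-change density form.) Let α ∈ ℝ with 0 < α < π and α/π irrational. For N ≥ 1 let S(N) be the number of integers n with 1 ≤ n ≤ N such that cos(nα) · cos((n+1)α) < 0 (i.e., the number of sign changes of the sequence (cos(nα)) up to N). Then lim_{N→∞} S(N)/N = α/π. -/
open Real Filter Topology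

/-!
Write `β = α / π` and `r n = round (n β)`. Since `cos (n α) = (-1) ^ r n * cos ((n β - r n) π)` and
`|n β - r n| ≤ 1/2`, the sign of `cos (n α)` is `(-1) ^ r n`; irrationality of `β` rules out
`cos (n α) = 0`. As `0 < β < 1`, the sequence `r` grows by `0` or `1` at each step, so `cos (n α)`
changes sign between `n` and `n + 1` exactly when `r` steps up. Hence
`S N = r (N + 1) - r 1 = N β + O(1)`.
-/

lemma round_le_round_add {x β : ℝ} (hβ : 0 ≤ β) : round x ≤ round (x + β) := by
  simp only [round_eq]
  exact Int.floor_le_floor (by linarith)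

lemma round_add_le_round_add_one {x β : ℝ} (hβ : β ≤ 1) : round (x + β) ≤ round x + 1 := by
  rw [← round_add_one]
  simp only [round_eq]
  exact Int.floor_le_floor (by linarith)

lemma abs_round_sub_round_sub_le (x y : ℝ) : |((round x - round y : ℤ) : ℝ) - (x - y)| ≤ 1 := by
  have hx := abs_le.mp (abs_sub_round x)
  have hy := abs_le.mp (abs_sub_round y)
  push_cast
  rw [abs_le]
  constructor <;> linarith [hx.1, hx.2, hy.1, hy.2]

lemma cos_mul_pi_ne_zero_of_irrational {t : ℝ} (ht : Irrational t) : cos (t * π) ≠ 0 := by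
  intro h
  obtain ⟨k, hk⟩ := Real.cos_eq_zero_iff.mp h
  have ht_eq : t = (2 * k + 1) / 2 := by
    have := Real.pi_pos.ne'
    field_simp at hk
    linarith
  exact ht ⟨(2 * k + 1) / 2, by rw [ht_eq]; push_cast; ring⟩

lemma neg_one_zpow_round_mul_cos_pos {t : ℝ} (h : cos (t * π) ≠ 0) :
    0 < (-1 : ℝ) ^ round t * cos (t * π) := by
  have hreduce : (-1 : ℝ) ^ round t * cos (t * π) = cos ((t - round t) * π) := by
    rw [sub_mul, cos_sub_int_mul_pi]
  have hnonneg : 0 ≤ cos ((t - round t) * π) := by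
    have hr := abs_le.mp (abs_sub_round t)
    apply cos_nonneg_of_mem_Icc
    constructor <;> nlinarith [Real.pi_pos]
  refine hreduce ▸ hnonneg.lt_of_ne' ?_
  rw [← hreduce]
  exact mul_ne_zero (zpow_ne_zero _ (by norm_num)) h

lemma mul_neg_iff_of_neg_one_zpow_mul_pos {a b : ℝ} {m m' : ℤ}
    (ha : 0 < (-1 : ℝ) ^ m * a) (hb : 0 < (-1 : ℝ) ^ m' * b) (hm : m ≤ m') (hm' : m' ≤ m + 1) :
    a * b < 0 ↔ m' = m + 1 := by
  have hsq : ((-1 : ℝ) ^ m * a) * ((-1 : ℝ) ^ m * b) = a * b := by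
    rw [mul_mul_mul_comm, ← zpow_add₀ (by norm_num), ← two_mul, zpow_mul]
    norm_num
  rcases (show m' = m ∨ m' = m + 1 by omega) with rfl | rfl
  · have := mul_pos ha hb
    constructor
    · intro h; linarith
    · intro h; omega
  · rw [zpow_add_one₀ (by norm_num)] at hb
    have := mul_neg_of_pos_of_neg ha (by linarith : (-1 : ℝ) ^ m * b < 0)
    simp only [iff_true]
    linarith

lemma card_filter_step_eq {f : ℕ → ℤ} (hf : ∀ n, f n ≤ f (n + 1) ∧ f (n + 1) ≤ f n + 1) (N : ℕ) :
    (((Finset.Icc 1 N).filter (fun n => f (n + 1) = f n + 1)).card : ℤ) = f (N + 1) - f 1 := by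
  induction N with
  | zero => simp
  | succ N ih =>
    rw [← Finset.insert_Icc_right_eq_Icc_add_one (by omega), Finset.filter_insert]
    have hnotMem : N + 1 ∉ (Finset.Icc 1 N).filter (fun n => f (n + 1) = f n + 1) := by
      simp
    have := hf (N + 1)
    split_ifs with hstep
    · rw [Finset.card_insert_of_notMem hnotMem]
      push_cast
      omega
    · omega

lemma tendsto_div_of_abs_sub_mul_le {u : ℕ → ℝ} {β C : ℝ} (h : ∀ N : ℕ, |u N - N * β| ≤ C) :
    Tendsto (fun N : ℕ => u N / N) atTop (𝓝 β) := by
  have herr : Tendsto (fun N : ℕ => (u N - N * β) / N) atTop (𝓝 0) := by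
    refine squeeze_zero_norm (fun N => ?_) (tendsto_const_div_atTop_nhds_zero_nat C)
    rw [norm_div, Real.norm_eq_abs, RCLike.norm_natCast]
    exact div_le_div_of_nonneg_right (h N) (Nat.cast_nonneg N)
  have := herr.const_add β
  rw [add_zero] at this
  refine this.congr' ?_
  filter_upwards [eventually_ne_atTop 0] with N hN
  field_simp
  ring

/-- Li's Theorem (Theorem 2), sign-change density form: for 0 < α < π with α/π
irrational, the number S(N) of n ∈ {1,…,N} with cos(nα)·cos((n+1)α) < 0 satisfies
S(N)/N → α/π. -/
theorem stmt_13 (α : ℝ) (hα0 : 0 < α) (hαπ : α < Real.pi)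
    (hirr : Irrational (α / Real.pi)) (S : ℕ → ℕ)
    (hS : ∀ N : ℕ, S N = ((Finset.Icc 1 N).filter
        (fun n : ℕ => Real.cos (n * α) * Real.cos ((n + 1) * α) < 0)).card) :
    Filter.Tendsto (fun N : ℕ => (S N : ℝ) / N) Filter.atTop (nhds (α / Real.pi)) := by
  set β := α / π
  have hαβ : ∀ n : ℕ, (n : ℝ) * α = n * β * π := fun n => by
    simp only [β, mul_assoc, div_mul_cancel₀ _ Real.pi_pos.ne']
  set r : ℕ → ℤ := fun n => round (n * β)
  have hsign : ∀ n, 1 ≤ n → 0 < (-1 : ℝ) ^ r n * cos (n * α) := fun n hn => by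
    rw [hαβ]
    exact neg_one_zpow_round_mul_cos_pos
      (cos_mul_pi_ne_zero_of_irrational (hirr.natCast_mul (by omega)))
  have hstep : ∀ n, r n ≤ r (n + 1) ∧ r (n + 1) ≤ r n + 1 := fun n => by
    simp only [r, Nat.cast_succ, add_mul, one_mul]
    exact ⟨round_le_round_add (div_pos hα0 Real.pi_pos).le,
      round_add_le_round_add_one ((div_lt_one Real.pi_pos).mpr hαπ).le⟩
  have hcount : ∀ N, (S N : ℤ) = r (N + 1) - r 1 := fun N => by
    rw [hS, ← card_filter_step_eq hstep]
    congr 2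
    refine Finset.filter_congr fun n hn => ?_
    have h1 : 1 ≤ n := (Finset.mem_Icc.mp hn).1
    have := hsign (n + 1) (by omega)
    push_cast at this
    exact mul_neg_iff_of_neg_one_zpow_mul_pos (hsign n h1) this (hstep n).1 (hstep n).2
  refine tendsto_div_of_abs_sub_mul_le (C := 1) fun N => ?_
  have := abs_round_sub_round_sub_le ((N + 1 : ℕ) * β) ((1 : ℕ) * β)
  rw [← hcount] at this
  push_cast at this
  convert this using 2
  ring
end

section
/- Let ξ ∈ ℝ. Then the principal-value Hilbert transform of sin equals cos at ξ: the limit as m → ∞ of (1/π) · ( ∫_{ξ + 1/m}^{ξ + m} sin(x)/(x − ξ) dx + ∫_{ξ − m}^{ξ − 1/m} sin(x)/(x − ξ) dx ) exists and equals cos(ξ). -/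
/-!
Substituting `x = ξ ± t` and using `sin (ξ + t) - sin (ξ - t) = 2 cos ξ sin t`, the truncated
principal value equals `(2 cos ξ / π) ∫_{1/m}^{m} sin t / t dt`, so everything reduces to the
Dirichlet integral `∫_0^∞ sin t / t dt = π / 2`. For that, write `1 / t = ∫_0^∞ e^{-ts} ds`
and swap the integrals:
`∫_0^M sin t / t dt = ∫_0^∞ (1 - e^{-sM} (cos M + s sin M)) / (1 + s²) ds`,
whose main part is `∫_0^∞ ds / (1 + s²) = π / 2` and whose remainder is at most `2 / M`.
-/

open MeasureTheory Set Filter Real Topology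

lemma integral_exp_neg_mul_Ioi {t : ℝ} (ht : 0 < t) :
    ∫ s in Ioi (0 : ℝ), exp (-t * s) = t⁻¹ := by
  rw [integral_exp_mul_Ioi (neg_neg_iff_pos.2 ht)]
  simp

lemma integral_exp_neg_mul_mul_sin (s M : ℝ) :
    ∫ t in (0 : ℝ)..M, exp (-s * t) * sin t
      = (1 - exp (-s * M) * (cos M + s * sin M)) / (1 + s ^ 2) := by
  have hderiv (x : ℝ) : HasDerivAt (fun t => -(exp (-s * t) * (s * sin t + cos t)) / (1 + s ^ 2))
      (exp (-s * x) * sin x) x := by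
    have he : HasDerivAt (fun t => exp (-s * t)) (exp (-s * x) * -s) x :=
      (hasDerivAt_exp _).comp x ((hasDerivAt_id x).const_mul (-s) |>.congr_deriv (mul_one _))
    have hg : HasDerivAt (fun t => s * sin t + cos t) (s * cos x + -sin x) x :=
      ((hasDerivAt_sin x).const_mul s).add (hasDerivAt_cos x)
    refine ((he.mul hg).neg.div_const _).congr_deriv ?_
    field_simp
    ring
  rw [intervalIntegral.integral_eq_sub_of_hasDerivAt (fun x _ => hderiv x)
    (Continuous.intervalIntegrable (by fun_prop) _ _)]
  simp only [mul_zero, exp_zero, sin_zero, cos_zero]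
  ring

lemma abs_sin_div_self_le_one (t : ℝ) : |sin t / t| ≤ 1 := by
  rcases eq_or_ne t 0 with rfl | ht
  · simp
  · rw [abs_div, div_le_one (abs_pos.2 ht)]
    exact abs_sin_le_abs

lemma intervalIntegrable_sin_div_self (a b : ℝ) :
    IntervalIntegrable (fun t => sin t / t) volume a b := by
  refine (intervalIntegrable_const (c := (1 : ℝ))).mono_fun
    (measurable_sin.div measurable_id).aestronglyMeasurable (ae_of_all _ fun t => ?_)
  simpa only [norm_eq_abs, abs_one] using abs_sin_div_self_le_one t

lemma sin_div_self_eq_integral_Ioi {t : ℝ} (ht : 0 < t) :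
    sin t / t = ∫ s in Ioi (0 : ℝ), exp (-t * s) * sin t := by
  rw [integral_mul_const, integral_exp_neg_mul_Ioi ht, div_eq_inv_mul]

lemma integral_abs_exp_neg_mul_mul_sin_Ioi {t : ℝ} (ht : 0 < t) :
    ∫ s in Ioi (0 : ℝ), |exp (-t * s) * sin t| = |sin t| / t := by
  simp_rw [abs_mul, abs_exp, integral_mul_const, integral_exp_neg_mul_Ioi ht, div_eq_inv_mul]

lemma integrable_exp_neg_mul_mul_sin_prod (M : ℝ) :
    Integrable (Function.uncurry fun t s : ℝ => exp (-t * s) * sin t)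
      ((volume.restrict (Ioc 0 M)).prod (volume.restrict (Ioi 0))) := by
  have hmeas : AEStronglyMeasurable (Function.uncurry fun t s : ℝ => exp (-t * s) * sin t)
      ((volume.restrict (Ioc 0 M)).prod (volume.restrict (Ioi 0))) :=
    (by fun_prop : Continuous fun p : ℝ × ℝ => exp (-p.1 * p.2) * sin p.1).aestronglyMeasurable
  refine (integrable_prod_iff hmeas).2 ⟨?_, ?_⟩
  · filter_upwards [ae_restrict_mem measurableSet_Ioc] with t ht
    simp only [Function.uncurry_apply_pair]
    exact (integrableOn_exp_mul_Ioi (neg_neg_iff_pos.2 ht.1) 0).mul_const _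
  · refine (integrable_const (1 : ℝ)).mono' hmeas.norm.integral_prod_right' ?_
    filter_upwards [ae_restrict_mem measurableSet_Ioc] with t ht
    simp only [Function.uncurry_apply_pair, norm_eq_abs]
    rw [integral_abs_exp_neg_mul_mul_sin_Ioi ht.1, abs_of_nonneg (by positivity [ht.1.le]),
      div_le_one ht.1]
    exact abs_sin_le_abs.trans (abs_of_pos ht.1).le

lemma integral_sin_div_self_eq_integral_Ioi {M : ℝ} (hM : 0 ≤ M) :
    ∫ t in (0 : ℝ)..M, sin t / t
      = ∫ s in Ioi (0 : ℝ), (1 - exp (-s * M) * (cos M + s * sin M)) / (1 + s ^ 2) := by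
  calc ∫ t in (0 : ℝ)..M, sin t / t
      = ∫ t in Ioc 0 M, ∫ s in Ioi (0 : ℝ), exp (-t * s) * sin t := by
        rw [intervalIntegral.integral_of_le hM]
        exact setIntegral_congr_fun measurableSet_Ioc fun t ht =>
          sin_div_self_eq_integral_Ioi ht.1
    _ = ∫ s in Ioi (0 : ℝ), ∫ t in (0 : ℝ)..M, exp (-s * t) * sin t := by
        rw [integral_integral_swap (integrable_exp_neg_mul_mul_sin_prod M)]
        simp_rw [intervalIntegral.integral_of_le hM, neg_mul, mul_comm]
    _ = _ := by simp_rw [integral_exp_neg_mul_mul_sin]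

lemma abs_exp_neg_mul_mul_cos_add_div_le {s : ℝ} (hs : 0 ≤ s) (M : ℝ) :
    |exp (-s * M) * (cos M + s * sin M) / (1 + s ^ 2)| ≤ 2 * exp (-M * s) := by
  have hnum : |cos M + s * sin M| ≤ 1 + s := by
    refine (abs_add_le _ _).trans (add_le_add (abs_cos_le_one M) ?_)
    rw [abs_mul, abs_of_nonneg hs]
    exact mul_le_of_le_one_right hs (abs_sin_le_one M)
  have hfrac : (1 + s) / (1 + s ^ 2) ≤ 2 := by
    rw [div_le_iff₀ (by positivity)]
    nlinarith [sq_nonneg (s - 1)]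
  rw [abs_div, abs_mul, abs_exp, abs_of_pos (by positivity : (0 : ℝ) < 1 + s ^ 2),
    show -s * M = -M * s by ring, mul_div_assoc, mul_comm 2]
  gcongr
  exact (div_le_div_of_nonneg_right hnum (by positivity)).trans hfrac

lemma integrableOn_exp_neg_mul_mul_cos_add_div {M : ℝ} (hM : 0 < M) :
    IntegrableOn (fun s => exp (-s * M) * (cos M + s * sin M) / (1 + s ^ 2)) (Ioi 0) := by
  refine ((integrableOn_exp_mul_Ioi (neg_neg_iff_pos.2 hM) 0).const_mul 2).mono'
    (((by fun_prop : Continuous fun s : ℝ => exp (-s * M) * (cos M + s * sin M)).div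
      (by fun_prop) fun s => by positivity).aestronglyMeasurable) ?_
  filter_upwards [ae_restrict_mem measurableSet_Ioi] with s hs
  exact abs_exp_neg_mul_mul_cos_add_div_le (le_of_lt hs) M

lemma integral_sin_div_self_eq_pi_div_two_sub {M : ℝ} (hM : 0 < M) :
    ∫ t in (0 : ℝ)..M, sin t / t
      = π / 2 - ∫ s in Ioi (0 : ℝ), exp (-s * M) * (cos M + s * sin M) / (1 + s ^ 2) := by
  have harctan : ∫ s in Ioi (0 : ℝ), (1 + s ^ 2)⁻¹ = π / 2 := by
    rw [integral_Ioi_inv_one_add_sq, arctan_zero, sub_zero]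
  rw [integral_sin_div_self_eq_integral_Ioi hM.le, ← harctan,
    ← integral_sub integrable_inv_one_add_sq.integrableOn
      (integrableOn_exp_neg_mul_mul_cos_add_div hM)]
  congr 1 with s
  rw [sub_div, one_div]

lemma abs_integral_exp_neg_mul_mul_cos_add_div_le {M : ℝ} (hM : 0 < M) :
    |∫ s in Ioi (0 : ℝ), exp (-s * M) * (cos M + s * sin M) / (1 + s ^ 2)| ≤ 2 * M⁻¹ := by
  rw [← norm_eq_abs, ← integral_exp_neg_mul_Ioi hM,
    ← integral_const_mul (2 : ℝ) fun s => exp (-M * s)]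
  refine norm_integral_le_of_norm_le
    ((integrableOn_exp_mul_Ioi (neg_neg_iff_pos.2 hM) 0).const_mul 2) ?_
  filter_upwards [ae_restrict_mem measurableSet_Ioi] with s hs
  exact abs_exp_neg_mul_mul_cos_add_div_le (le_of_lt hs) M

theorem tendsto_integral_sin_div_self_atTop :
    Tendsto (fun M => ∫ t in (0 : ℝ)..M, sin t / t) atTop (𝓝 (π / 2)) := by
  have hrem : Tendsto (fun M => ∫ s in Ioi (0 : ℝ),
      exp (-s * M) * (cos M + s * sin M) / (1 + s ^ 2)) atTop (𝓝 0) := by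
    refine squeeze_zero_norm' ?_ (by simpa using tendsto_inv_atTop_zero.const_mul (2 : ℝ))
    filter_upwards [eventually_gt_atTop 0] with M hM
    exact abs_integral_exp_neg_mul_mul_cos_add_div_le hM
  have hlim := (tendsto_const_nhds (x := π / 2)).sub hrem
  rw [sub_zero] at hlim
  refine hlim.congr' ?_
  filter_upwards [eventually_gt_atTop 0] with M hM
  exact (integral_sin_div_self_eq_pi_div_two_sub hM).symm

lemma tendsto_integral_one_div_nat_sin_div_self :
    Tendsto (fun m : ℕ => ∫ t in (1 / (m : ℝ))..m, sin t / t) atTop (𝓝 (π / 2)) := by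
  have hsplit (m : ℕ) : ∫ t in (1 / (m : ℝ))..m, sin t / t
      = (∫ t in (0 : ℝ)..m, sin t / t) - ∫ t in (0 : ℝ)..(1 / (m : ℝ)), sin t / t :=
    (intervalIntegral.integral_interval_sub_left (intervalIntegrable_sin_div_self _ _)
      (intervalIntegrable_sin_div_self _ _)).symm
  have hsmall :
      Tendsto (fun m : ℕ => ∫ t in (0 : ℝ)..(1 / (m : ℝ)), sin t / t) atTop (𝓝 0) := by
    refine squeeze_zero_norm (fun m => ?_) tendsto_one_div_atTop_nhds_zero_nat
    have := intervalIntegral.norm_integral_le_of_norm_le_const (a := 0) (b := 1 / (m : ℝ))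
      (f := fun t => sin t / t) fun t _ => abs_sin_div_self_le_one t
    simpa [abs_of_nonneg (by positivity : (0 : ℝ) ≤ 1 / (m : ℝ))] using this
  simp_rw [hsplit]
  simpa using (tendsto_integral_sin_div_self_atTop.comp tendsto_natCast_atTop_atTop).sub hsmall

lemma integral_sin_div_sub_add_integral_sin_div_sub (ξ : ℝ) {a b : ℝ}
    (ha : 0 < a) (hb : 0 < b) :
    (∫ x in (ξ + a)..(ξ + b), sin x / (x - ξ)) + ∫ x in (ξ - b)..(ξ - a), sin x / (x - ξ)
      = 2 * cos ξ * ∫ t in a..b, sin t / t := by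
  have hne : ∀ t ∈ uIcc a b, t ≠ 0 := fun t ht => (lt_min ha hb |>.trans_le ht.1).ne'
  have hright : IntervalIntegrable (fun t => sin (ξ + t) / t) volume a b :=
    (ContinuousOn.div (by fun_prop) continuousOn_id hne).intervalIntegrable
  have hleft : IntervalIntegrable (fun t => sin (ξ - t) / -t) volume a b :=
    (ContinuousOn.div (by fun_prop) continuousOn_neg fun t ht => neg_ne_zero.2 (hne t ht))
      |>.intervalIntegrable
  have hsin (t : ℝ) : sin (ξ + t) / t + sin (ξ - t) / -t = 2 * cos ξ * (sin t / t) := by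
    rw [div_neg, ← sub_eq_add_neg, ← sub_div, sin_add, sin_sub]
    ring
  rw [← intervalIntegral.integral_comp_add_left, ← intervalIntegral.integral_comp_sub_left]
  simp only [add_sub_cancel_left, sub_sub_cancel_left]
  rw [← intervalIntegral.integral_add hright hleft]
  simp_rw [hsin, intervalIntegral.integral_const_mul]

/-- Example 5, equation (34): the principal-value Hilbert transform of sin equals cos:
(1/π)(∫_{ξ+1/m}^{ξ+m} + ∫_{ξ−m}^{ξ−1/m}) sin x/(x − ξ) dx → cos ξ as m → ∞. -/
theorem stmt_19 (ξ : ℝ) :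
    Filter.Tendsto (fun m : ℕ =>
        (1 / Real.pi) *
          ((∫ x in (ξ + 1 / (m : ℝ))..(ξ + (m : ℝ)), Real.sin x / (x - ξ)) +
            ∫ x in (ξ - (m : ℝ))..(ξ - 1 / (m : ℝ)), Real.sin x / (x - ξ)))
      Filter.atTop (nhds (Real.cos ξ)) := by
  have hlim :=
    (tendsto_integral_one_div_nat_sin_div_self.const_mul (2 * cos ξ)).const_mul (1 / π)
  rw [show 1 / π * (2 * cos ξ * (π / 2)) = cos ξ by field_simp] at hlim
  refine hlim.congr' ?_
  filter_upwards [eventually_gt_atTop 0] with m hm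
  have hm_pos : (0 : ℝ) < m := Nat.cast_pos.2 hm
  rw [integral_sin_div_sub_add_integral_sin_div_sub ξ (by positivity) hm_pos]
end
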